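/- Any truncated Toeplitz operator in 𝒯(u) of type α ∈ ℂ has a symbol of the form φ₀ + α·conj(S(Cφ₀)) + c·K₀ where φ₀ ∈ K_u satisfies φ₀(0) = 0 and c ∈ ℂ; and any truncated Toeplitz operator in 𝒯(u) of type ∞ has a symbol of the form conj(φ₀) + c·K₀ where φ₀ ∈ K_u satisfies φ₀(0) = 0 and c ∈ ℂ. -/

import Mathlib

/-! # Setting: truncated Toeplitz operators on model spaces

We work on the circle `𝕋`, realized as `AddCircle (2π)`, with its normalized Haar
(Lebesgue) measure `m`.  `L2` is the Lebesgue space `L²(𝕋, m)`, `H2 ⊆ L2` is the Hardy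
space (the closed span of the nonnegative Fourier monomials), and for an inner function
`u` the model space is `Ku u = H² ⊖ uH²`, with orthogonal projection `Pu u : L² → Ku u`.

For a symbol `Φ`, `IsTTO u Φ A` says that the bounded operator `A` on `Ku u` is the
truncated Toeplitz operator with symbol `Φ`, i.e. `A f = P_u (Φ f)` for every bounded
`f ∈ K_u`; thus `A ∈ 𝒯(u)` iff `∃ Φ ∈ L², IsTTO u Φ A`. -/

open MeasureTheory Complex
open scoped Real ENNReal ComplexConjugate

noncomputable section

namespace TTO

instance fact_two_pi_pos : Fact ((0:ℝ) < 2 * Real.pi) := ⟨by positivity⟩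

/-- The circle, realized additively as `ℝ / 2πℤ`. -/
abbrev Circ : Type := AddCircle (2 * Real.pi)

/-- Normalized Lebesgue measure on the circle. -/
abbrev m : Measure Circ := @AddCircle.haarAddCircle (2 * Real.pi) _

/-- The Lebesgue space `L²` of the circle. -/
abbrev L2 : Type := Lp ℂ 2 m

open scoped Classical in
/-- The element of `L²` determined by a function (junk value `0` if the function is
not square-integrable). -/
def toLp2 (f : Circ → ℂ) : L2 := if h : MemLp f 2 m then h.toLp f else 0

/-- The coordinate function `z` on the circle. -/
def coord : Circ → ℂ := fun w => fourier 1 w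

/-- The Hardy space `H²`: the closed linear span in `L²` of the monomials `zⁿ`, `n ≥ 0`. -/
def H2 : Submodule ℂ L2 :=
  (Submodule.span ℂ (Set.range fun n : ℕ => (fourierLp 2 (n : ℤ) : L2))).topologicalClosure

instance : CompleteSpace H2 :=
  @IsClosed.completeSpace_coe _ _ _ _ (Submodule.isClosed_topologicalClosure _)

/-- The (closed) subspace `uH²` of `L²`. -/
def uH2 (u : Circ → ℂ) : Submodule ℂ L2 :=
  (Submodule.span ℂ {g : L2 | ∃ f : L2, f ∈ H2 ∧
    (g : Circ → ℂ) =ᵐ[m] fun w => u w * (f : Circ → ℂ) w}).topologicalClosure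

/-- The model space `K_u = H² ⊖ uH²`. -/
def Ku (u : Circ → ℂ) : Submodule ℂ L2 := H2 ⊓ (uH2 u)ᗮ

instance completeSpace_Ku (u : Circ → ℂ) : CompleteSpace (Ku u) := by
  have h : IsClosed ((Ku u : Set L2)) := by
    have h1 : IsClosed ((H2 : Set L2)) := Submodule.isClosed_topologicalClosure _
    have h2 : IsClosed (((uH2 u)ᗮ : Set L2)) := Submodule.isClosed_orthogonal _
    have h3 : (Ku u : Set L2) = (H2 : Set L2) ∩ ((uH2 u)ᗮ : Set L2) := by
      simp [Ku]
    rw [h3]; exact h1.inter h2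
  exact @IsClosed.completeSpace_coe _ _ _ _ h

/-- The orthogonal projection `P_u : L² → K_u`. -/
def Pu (u : Circ → ℂ) : L2 →L[ℂ] Ku u := (Ku u).orthogonalProjectionOnto

/-- `u` is an inner function: (essentially bounded) measurable, of unit modulus a.e.,
and belonging to `H²`. -/
def IsInner (u : Circ → ℂ) : Prop :=
  AEStronglyMeasurable u m ∧ (∀ᵐ w ∂m, ‖u w‖ = 1) ∧ toLp2 u ∈ H2

/-- `u` is nonconstant (as an element of `L²`). -/
def Nonconst (u : Circ → ℂ) : Prop := ¬ ∃ c : ℂ, u =ᵐ[m] fun _ => c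

/-- `IsTTO u Φ A` : the bounded operator `A` on the model space `K_u` is the truncated
Toeplitz operator with symbol `Φ`, i.e. `A f = P_u (Φ · f)` for every bounded `f ∈ K_u`.
(`A ∈ 𝒯(u)` with symbol `Φ`.) -/
def IsTTO (u Φ : Circ → ℂ) (A : Ku u →L[ℂ] Ku u) : Prop :=
  ∀ f : Ku u, MemLp ((f : L2) : Circ → ℂ) ⊤ m →
    A f = Pu u (toLp2 fun w => Φ w * ((f : L2) : Circ → ℂ) w)

/-- `A ∈ 𝒯(u)`: `A` is a (bounded) truncated Toeplitz operator, i.e. it has some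
symbol in `L²`. -/
def MemTTOs (u : Circ → ℂ) (A : Ku u →L[ℂ] Ku u) : Prop :=
  ∃ Φ : Circ → ℂ, MemLp Φ 2 m ∧ IsTTO u Φ A

/-- Equality of the two (densely defined) truncated Toeplitz operators with symbols
`Φ` and `Ψ`: they agree on all bounded elements of `K_u`. -/
def TTOeq (u Φ Ψ : Circ → ℂ) : Prop :=
  ∀ f : Ku u, MemLp ((f : L2) : Circ → ℂ) ⊤ m →
    Pu u (toLp2 fun w => Φ w * ((f : L2) : Circ → ℂ) w) =
      Pu u (toLp2 fun w => Ψ w * ((f : L2) : Circ → ℂ) w)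

/-- Evaluation at the origin: for `f ∈ H²`, the value `f(0)` of the holomorphic
extension is `∫ f dm` (the zeroth Fourier coefficient). -/
def ev0 (f : Circ → ℂ) : ℂ := ∫ w, f w ∂m

/-- The reproducing kernel `K₀ = 1 − conj(u(0))·u` of `K_u` at `0`, as a function. -/
def K0fun (u : Circ → ℂ) : Circ → ℂ := fun w => 1 - conj (ev0 u) * u w

/-- `K₀` as an element of `K_u`. -/
def K0 (u : Circ → ℂ) : Ku u := Pu u (toLp2 (K0fun u))

/-- The conjugate kernel `CK₀ = (u − u(0))/z`, as a function. -/
def CK0fun (u : Circ → ℂ) : Circ → ℂ := fun w => (u w - ev0 u) / coord w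

/-- `CK₀` as an element of `K_u`. -/
def CK0 (u : Circ → ℂ) : Ku u := Pu u (toLp2 (CK0fun u))

/-- The conjugation `C f = u · conj(z f)`, as a map into `L²`. -/
def CfunL2 (u f : Circ → ℂ) : L2 := toLp2 fun w => u w * conj (coord w * f w)

/-- The conjugation `C` on the model space `K_u`.  (Since `C` maps `K_u` onto itself,
post-composing with `P_u` realizes it as a map `K_u → K_u`.) -/
def Cop (u : Circ → ℂ) (f : Ku u) : Ku u := Pu u (CfunL2 u ((f : L2) : Circ → ℂ))

lemma smul_fun_eq_mul (g f : Circ → ℂ) : g • f = fun w => g w * f w := rfl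

lemma memℒp_mul_of_top {g : Circ → ℂ} (hg : MemLp g ⊤ m) (f : L2) :
    MemLp (fun w => g w * (f : Circ → ℂ) w) 2 m := by
  have h : MemLp (g • ((f : L2) : Circ → ℂ)) 2 m := (Lp.memLp f).smul hg
  rwa [smul_fun_eq_mul] at h

lemma memℒp_top_coord : MemLp coord ⊤ m := by
  refine memLp_top_of_bound ((map_continuous (fourier 1)).aestronglyMeasurable) 1 ?_
  exact Filter.Eventually.of_forall fun w => le_of_eq (Circle.norm_coe _)

/-- Multiplication by an essentially bounded function, as a bounded operator on `L²`. -/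
def mulCLM (g : Circ → ℂ) (hg : MemLp g ⊤ m) : L2 →L[ℂ] L2 :=
  LinearMap.mkContinuous
    { toFun := fun f => (memℒp_mul_of_top hg f).toLp _
      map_add' := by
        intro f₁ f₂
        apply Lp.ext
        filter_upwards [MemLp.coeFn_toLp (memℒp_mul_of_top hg (f₁ + f₂)),
          Lp.coeFn_add ((memℒp_mul_of_top hg f₁).toLp _) ((memℒp_mul_of_top hg f₂).toLp _),
          MemLp.coeFn_toLp (memℒp_mul_of_top hg f₁),
          MemLp.coeFn_toLp (memℒp_mul_of_top hg f₂),
          Lp.coeFn_add f₁ f₂] with w e0 e1 e2 e3 e4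
        simp only [e0, e1, Pi.add_apply, e2, e3, e4, mul_add]
      map_smul' := by
        intro c f
        apply Lp.ext
        filter_upwards [MemLp.coeFn_toLp (memℒp_mul_of_top hg (c • f)),
          Lp.coeFn_smul c ((memℒp_mul_of_top hg f).toLp _),
          MemLp.coeFn_toLp (memℒp_mul_of_top hg f),
          Lp.coeFn_smul c f] with w e0 e1 e2 e3
        simp only [e0, RingHom.id_apply, e1, Pi.smul_apply, e2, e3, smul_eq_mul]
        ring }
    (eLpNorm g ⊤ m).toReal
    (by
      intro f
      have hb : eLpNorm (fun w => g w * ((f : L2) : Circ → ℂ) w) 2 m ≤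
          eLpNorm g ⊤ m * eLpNorm ((f : L2) : Circ → ℂ) 2 m := by
        have h := eLpNorm_smul_le_eLpNorm_top_mul_eLpNorm 2 (Lp.aestronglyMeasurable f) g
        rwa [smul_fun_eq_mul] at h
      dsimp only [LinearMap.coe_mk, AddHom.coe_mk]
      rw [Lp.norm_toLp, Lp.norm_def, ← ENNReal.toReal_mul]
      exact ENNReal.toReal_mono
        (ENNReal.mul_ne_top hg.eLpNorm_ne_top (Lp.memLp f).eLpNorm_ne_top) hb)

/-- The compressed shift `S = A_z` on the model space `K_u`. -/
def Sop (u : Circ → ℂ) : Ku u →L[ℂ] Ku u :=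
  (Pu u).comp ((mulCLM coord memℒp_top_coord).comp (Ku u).subtypeL)

/-- The rank one operator `f ⊗ g : h ↦ ⟨h, g⟩ f` (inner product linear in the first slot,
as in the paper). -/
def rankOne {E : Type*} [NormedAddCommGroup E] [InnerProductSpace ℂ E] (f g : E) :
    E →L[ℂ] E :=
  (innerSL ℂ g).smulRight f

/-- The modified (generalized) shift
`S_α = S + (α/(1 − α·conj(u(0)))) K₀ ⊗ CK₀` on `K_u`. -/
def Salpha (u : Circ → ℂ) (α : ℂ) : Ku u →L[ℂ] Ku u :=
  Sop u + (α / (1 - α * conj (ev0 u))) • rankOne (K0 u) (CK0 u)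

/-- The symbol `φ + α·conj(S(Cφ)) + c` associated with `φ ∈ K_u`, `α, c ∈ ℂ`. -/
def typeSymbol (u : Circ → ℂ) (α : ℂ) (φ : Ku u) (c : ℂ) : Circ → ℂ :=
  fun w => ((φ : L2) : Circ → ℂ) w +
    α * conj (((Sop u (Cop u φ) : L2) : Circ → ℂ) w) + c

/-- `A ∈ 𝒯(u)` is of type `α ∈ ℂ`: it has a symbol of the form `φ + α·conj(S(Cφ)) + c`
with `φ ∈ K_u`, `c ∈ ℂ`. -/
def IsTypeC (u : Circ → ℂ) (α : ℂ) (A : Ku u →L[ℂ] Ku u) : Prop :=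
  ∃ (φ : Ku u) (c : ℂ), IsTTO u (typeSymbol u α φ c) A

/-- `A ∈ 𝒯(u)` is of type `∞`: it has an antiholomorphic symbol `conj ψ`, `ψ ∈ H²`. -/
def IsTypeInf (u : Circ → ℂ) (A : Ku u →L[ℂ] Ku u) : Prop :=
  ∃ ψ : Circ → ℂ, MemLp ψ 2 m ∧ toLp2 ψ ∈ H2 ∧ IsTTO u (fun w => conj (ψ w)) A

/-- Type over the Riemann sphere `ℂ* = ℂ ∪ {∞}`, encoded as `Option ℂ`
(`none` being the point at infinity). -/
def IsTypeS (u : Circ → ℂ) (A : Ku u →L[ℂ] Ku u) : Option ℂ → Prop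
  | none => IsTypeInf u A
  | some α => IsTypeC u α A

/-- The self-map `α ↦ conj(α)⁻¹` of the Riemann sphere `ℂ* = ℂ ∪ {∞}` (encoded as
`Option ℂ`, `none` being `∞`), with the conventions `0⁻¹ = ∞`, `∞⁻¹ = 0`,
`conj ∞ = ∞`. -/
def sphereInvConj : Option ℂ → Option ℂ
  | none => some 0
  | some α => if α = 0 then none else some (conj α)⁻¹

/-- The holomorphic (Cauchy) extension of a boundary function to the disc:
`f(z) = ∫ f(w)/(1 − z·conj w) dm(w)`; for `f ∈ H²` and `|z| < 1` this is the value at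
`z` of the holomorphic extension of `f`. -/
def cauchyExt (f : Circ → ℂ) (z : ℂ) : ℂ := ∫ w, f w / (1 - z * conj (coord w)) ∂m

/-- A Stolz (nontangential approach) region at the boundary point `ζ` with aperture
parameter `M`. -/
def stolz (ζ : ℂ) (M : ℝ) : Set ℂ := {z : ℂ | ‖z‖ < 1 ∧ ‖ζ - z‖ < M * (1 - ‖z‖)}

/-- `f` has nontangential limit `L` at the boundary point `ζ`. -/
def NTlim (f : ℂ → ℂ) (ζ L : ℂ) : Prop :=
  ∀ M : ℝ, 1 < M → Filter.Tendsto f (nhdsWithin ζ (stolz ζ M)) (nhds L)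

/-- `u` has an angular derivative in the sense of Caratheodory at the boundary point
`ζ`, with nontangential limits `uζ` (of unit modulus) for `u` and `u'ζ` for `u′`. -/
def HasADC (u : Circ → ℂ) (ζ uζ u'ζ : ℂ) : Prop :=
  ‖ζ‖ = 1 ∧ ‖uζ‖ = 1 ∧ NTlim (cauchyExt u) ζ uζ ∧ NTlim (deriv (cauchyExt u)) ζ u'ζ

end TTO

/-!
`K₀` is the reproducing kernel of `K_u` at the origin, so `φ₀ = φ - t K₀`, where `t K₀` is the
orthogonal projection of `φ` onto `ℂ K₀`, vanishes at `0`. Since `C` is conjugate-linear and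
`S C K₀ = -u(0) K₀`, passing from `φ` to `φ₀` changes the symbol by a multiple of `K₀` plus a
combination `a u + b ū` (the constant is absorbed through `1 = K₀ + conj(u(0)) u`). Such a
combination is a symbol of the zero operator: `u f ∈ uH²`, and more generally `P_u(x̄ f) = 0` for
`x ∈ uH²` and bounded `f ∈ K_u`, because `u f̄ = z · C f` is bounded, analytic and vanishes at
`0`. The same fact shows that an antiholomorphic symbol `ψ̄`, `ψ ∈ H²`, may be replaced by the
conjugate of `P_u ψ`, since `ψ - P_u ψ ∈ uH²`.
-/

namespace TTO

open scoped InnerProductSpace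

variable {u : Circ → ℂ}

section Lebesgue

lemma toLp2_coeFn {f : Circ → ℂ} (hf : MemLp f 2 m) : (toLp2 f : Circ → ℂ) =ᵐ[m] f := by
  rw [toLp2, dif_pos hf]
  exact hf.coeFn_toLp

lemma toLp2_congr_ae {f g : Circ → ℂ} (h : f =ᵐ[m] g) : toLp2 f = toLp2 g := by
  by_cases hf : MemLp f 2 m
  · rw [toLp2, toLp2, dif_pos hf, dif_pos (hf.ae_eq h)]
    exact MemLp.toLp_congr _ _ h
  · rw [toLp2, toLp2, dif_neg hf, dif_neg (mt (memLp_congr_ae h).mpr hf)]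

lemma toLp2_coe (f : L2) : toLp2 f = f := by
  rw [toLp2, dif_pos (Lp.memLp f), Lp.toLp_coeFn]

lemma toLp2_eq_of_ae_eq {f : Circ → ℂ} {g : L2} (h : (g : Circ → ℂ) =ᵐ[m] f) : toLp2 f = g := by
  rw [← toLp2_coe g]
  exact toLp2_congr_ae h.symm

lemma toLp2_add {f g : Circ → ℂ} (hf : MemLp f 2 m) (hg : MemLp g 2 m) :
    toLp2 (fun w => f w + g w) = toLp2 f + toLp2 g := by
  have hfg : MemLp (fun w => f w + g w) 2 m := hf.add hg
  rw [toLp2, toLp2, toLp2, dif_pos hf, dif_pos hg, dif_pos hfg]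
  exact hf.toLp_add hg

lemma toLp2_const_mul (c : ℂ) {f : Circ → ℂ} (hf : MemLp f 2 m) :
    toLp2 (fun w => c * f w) = c • toLp2 f := by
  rw [toLp2, toLp2, dif_pos hf, dif_pos (hf.const_mul c)]
  exact hf.toLp_const_smul c

lemma memLp_conj {p : ℝ≥0∞} {f : Circ → ℂ} (hf : MemLp f p m) :
    MemLp (fun w => conj (f w)) p m :=
  hf.star

lemma inner_eq_integral (f g : L2) : ⟪f, g⟫_ℂ = ∫ w, conj (f w) * g w ∂m := by
  simp only [L2.inner_def, RCLike.inner_apply, mul_comm]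

lemma inner_eq_integral_of_ae_eq {f g : L2} {f' g' : Circ → ℂ}
    (hf : (f : Circ → ℂ) =ᵐ[m] f') (hg : (g : Circ → ℂ) =ᵐ[m] g') :
    ⟪f, g⟫_ℂ = ∫ w, conj (f' w) * g' w ∂m := by
  rw [inner_eq_integral]
  refine integral_congr_ae ?_
  filter_upwards [hf, hg] with w h1 h2
  rw [h1, h2]

def integralMulCLM (g : L2) : L2 →L[ℂ] ℂ := innerSL ℂ (toLp2 fun w => conj (g w))

lemma integralMulCLM_apply (g f : L2) : integralMulCLM g f = ∫ w, g w * f w ∂m := by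
  rw [integralMulCLM, innerSL_apply_apply,
    inner_eq_integral_of_ae_eq (toLp2_coeFn (memLp_conj (Lp.memLp g))) (ae_eq_refl _)]
  simp only [Complex.conj_conj]

lemma norm_coord (w : Circ) : ‖coord w‖ = 1 := Circle.norm_coe _

lemma coord_mul_conj (w : Circ) : coord w * conj (coord w) = 1 := by
  rw [Complex.mul_conj, Complex.normSq_eq_norm_sq, norm_coord, one_pow, Complex.ofReal_one]

lemma toLp2_coord : toLp2 coord = fourierLp 2 1 :=
  toLp2_eq_of_ae_eq (coeFn_fourierLp 2 1)

lemma integral_coord : ∫ w, coord w ∂m = 0 := by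
  have h := congrFun (fourierCoeff_fourier (T := 2 * π) 1) 0
  simpa [fourierCoeff, coord] using h

lemma integral_eq_inner_fourierLp_zero (f : L2) : ∫ w, f w ∂m = ⟪fourierLp 2 0, f⟫_ℂ := by
  rw [inner_eq_integral_of_ae_eq (coeFn_fourierLp 2 0) (ae_eq_refl _)]
  simp only [fourier_zero, map_one, one_mul]

lemma fourierCoeff_eq_inner (f : L2) (n : ℤ) : fourierCoeff f n = ⟪fourierLp 2 n, f⟫_ℂ := by
  rw [← fourierBasis_repr, fourierBasis.repr_apply_apply, coe_fourierBasis]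

lemma fourierCoeff_mul_fourier (f : Circ → ℂ) (n j : ℤ) :
    fourierCoeff (fun w => f w * fourier n w) j = fourierCoeff f (j - n) := by
  simp only [fourierCoeff, smul_eq_mul]
  congr 1 with w
  rw [show -(j - n) = -j + n by ring, fourier_add]
  ring

lemma integral_mul_fourier (f : Circ → ℂ) (n : ℤ) :
    ∫ w, f w * fourier n w ∂m = fourierCoeff f (-n) := by
  simp only [fourierCoeff, smul_eq_mul, neg_neg, mul_comm]

lemma mulCLM_eq_toLp2 {b : Circ → ℂ} (hb : MemLp b ⊤ m) (f : L2) :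
    mulCLM b hb f = toLp2 fun w => b w * f w := by
  rw [toLp2, dif_pos (memℒp_mul_of_top hb f)]
  rfl

end Lebesgue

section Hardy

lemma fourierLp_mem_H2 (n : ℕ) : fourierLp 2 (n : ℤ) ∈ H2 :=
  Submodule.le_topologicalClosure _ (Submodule.subset_span ⟨n, rfl⟩)

lemma H2_le_ker (L : L2 →L[ℂ] ℂ) (h : ∀ n : ℕ, L (fourierLp 2 (n : ℤ)) = 0) :
    H2 ≤ LinearMap.ker (L : L2 →ₗ[ℂ] ℂ) := by
  refine Submodule.topologicalClosure_minimal _ ?_ L.isClosed_ker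
  rw [Submodule.span_le]
  rintro _ ⟨n, rfl⟩
  exact h n

lemma fourierCoeff_eq_zero_of_mem_H2 {f : L2} (hf : f ∈ H2) {n : ℤ} (hn : n < 0) :
    fourierCoeff f n = 0 := by
  rw [fourierCoeff_eq_inner]
  refine H2_le_ker (innerSL ℂ (fourierLp 2 n)) (fun k => ?_) hf
  rw [innerSL_apply_apply, orthonormal_iff_ite.mp orthonormal_fourier, if_neg (by omega)]

lemma mem_H2_of_fourierCoeff_eq_zero {f : L2} (hf : ∀ n < 0, fourierCoeff f n = 0) :
    f ∈ H2 := by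
  set p : H2 := H2.orthogonalProjectionOnto f
  suffices f - p = 0 by rw [sub_eq_zero.mp this]; exact p.2
  have hperp : f - p ∈ H2ᗮ := H2.sub_starProjection_mem_orthogonal f
  refine fourierBasis.repr.map_eq_zero_iff.mp (lp.ext (funext fun n => ?_))
  rw [fourierBasis.repr_apply_apply, coe_fourierBasis]
  rcases lt_or_ge n 0 with hn | hn
  · rw [inner_sub_right, ← fourierCoeff_eq_inner, ← fourierCoeff_eq_inner, hf n hn,
      fourierCoeff_eq_zero_of_mem_H2 p.2 hn, sub_zero]
    rfl
  · lift n to ℕ using hn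
    exact (H2.mem_orthogonal _).mp hperp _ (fourierLp_mem_H2 n)

lemma integral_mul_fourierLp (f : Circ → ℂ) (n : ℤ) :
    ∫ w, f w * fourierLp 2 n w ∂m = fourierCoeff f (-n) := by
  rw [← integral_mul_fourier]
  refine integral_congr_ae ?_
  filter_upwards [coeFn_fourierLp 2 n] with w hw
  rw [hw]

lemma toLp2_coord_mem_H2 : toLp2 coord ∈ H2 := by
  rw [toLp2_coord]
  exact_mod_cast fourierLp_mem_H2 1

lemma integral_mul_of_mem_H2 {b f : L2} (hb : b ∈ H2) (hf : f ∈ H2) :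
    ∫ w, b w * f w ∂m = (∫ w, b w ∂m) * ∫ w, f w ∂m := by
  set L := integralMulCLM b - (∫ w, b w ∂m) • innerSL ℂ (fourierLp 2 0)
  have hL : ∀ g, L g = ∫ w, b w * g w ∂m - (∫ w, b w ∂m) * ∫ w, g w ∂m := fun g => by
    simp [L, integralMulCLM_apply, integral_eq_inner_fourierLp_zero]
  have hLf : L f = 0 := by
    refine H2_le_ker L (fun n => ?_) hf
    rw [hL, integral_mul_fourierLp, integral_eq_inner_fourierLp_zero (fourierLp 2 n),
      orthonormal_iff_ite.mp orthonormal_fourier]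
    rcases Nat.eq_zero_or_pos n with rfl | hn
    · simp [fourierCoeff]
    · rw [fourierCoeff_eq_zero_of_mem_H2 hb (by omega), if_neg (by omega), mul_zero, sub_zero]
  rwa [hL, sub_eq_zero] at hLf

lemma mul_mem_H2 {b : Circ → ℂ} (hb : MemLp b ⊤ m) (hbH : toLp2 b ∈ H2) {f : L2}
    (hf : f ∈ H2) : toLp2 (fun w => b w * f w) ∈ H2 := by
  rw [← mulCLM_eq_toLp2 hb]
  suffices H2 ≤ H2.comap (mulCLM b hb : L2 →ₗ[ℂ] L2) from this hf
  refine Submodule.topologicalClosure_minimal _ ?_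
    ((Submodule.isClosed_topologicalClosure _).preimage (mulCLM b hb).continuous)
  rw [Submodule.span_le]
  rintro _ ⟨n, rfl⟩
  refine mem_H2_of_fourierCoeff_eq_zero fun j hj => ?_
  change fourierCoeff (mulCLM b hb (fourierLp 2 n) : Circ → ℂ) j = 0
  have hbn : (mulCLM b hb (fourierLp 2 n) : Circ → ℂ) =ᵐ[m] fun w => b w * fourier n w := by
    rw [mulCLM_eq_toLp2]
    filter_upwards [toLp2_coeFn (memℒp_mul_of_top hb _), coeFn_fourierLp 2 n] with w h1 h2
    rw [h1, h2]
  rw [fourierCoeff_congr_ae hbn, fourierCoeff_mul_fourier,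
    ← fourierCoeff_congr_ae (toLp2_coeFn (hb.mono_exponent le_top))]
  exact fourierCoeff_eq_zero_of_mem_H2 hbH (by omega)

lemma integral_mul_mul_of_mem_H2 {b : Circ → ℂ} (hb : MemLp b ⊤ m) (hbH : toLp2 b ∈ H2)
    {f g : L2} (hf : f ∈ H2) (hg : g ∈ H2) :
    ∫ w, b w * f w * g w ∂m = (∫ w, b w ∂m) * (∫ w, f w ∂m) * ∫ w, g w ∂m := by
  have hbf := toLp2_coeFn (memℒp_mul_of_top hb f)
  have hb2 := toLp2_coeFn (hb.mono_exponent le_top)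
  calc ∫ w, b w * f w * g w ∂m
      = ∫ w, (toLp2 fun w => b w * f w) w * g w ∂m := by
        refine integral_congr_ae ?_
        filter_upwards [hbf] with w hw
        rw [hw]
    _ = (∫ w, (toLp2 b) w * f w ∂m) * ∫ w, g w ∂m := by
        rw [integral_mul_of_mem_H2 (mul_mem_H2 hb hbH hf) hg]
        congr 1
        refine integral_congr_ae ?_
        filter_upwards [hbf, hb2] with w h1 h2
        rw [h1, h2]
    _ = (∫ w, b w ∂m) * (∫ w, f w ∂m) * ∫ w, g w ∂m := by
        rw [integral_mul_of_mem_H2 hbH hf, integral_congr_ae hb2]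

end Hardy

section ModelSpace

lemma IsInner.memLp_top (hu : IsInner u) : MemLp u ⊤ m :=
  memLp_top_of_bound hu.1 1 (hu.2.1.mono fun _ h => h.le)

lemma IsInner.memLp_two (hu : IsInner u) : MemLp u 2 m :=
  hu.memLp_top.mono_exponent le_top

lemma IsInner.conj_mul_self (hu : IsInner u) : ∀ᵐ w ∂m, conj (u w) * u w = 1 := by
  filter_upwards [hu.2.1] with w hw
  rw [mul_comm, Complex.mul_conj, Complex.normSq_eq_norm_sq, hw, one_pow, Complex.ofReal_one]

lemma toLp2_mul_mem_uH2 {f : L2} (hf : f ∈ H2) : toLp2 (fun w => u w * f w) ∈ uH2 u := by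
  by_cases hfu : MemLp (fun w => u w * f w) 2 m
  · exact Submodule.le_topologicalClosure _ (Submodule.subset_span ⟨f, hf, toLp2_coeFn hfu⟩)
  · rw [toLp2, dif_neg hfu]
    exact zero_mem _

lemma toLp2_mem_uH2 : toLp2 u ∈ uH2 u := by
  convert toLp2_mul_mem_uH2 (u := u) (fourierLp_mem_H2 0) using 1
  refine toLp2_congr_ae ?_
  filter_upwards [coeFn_fourierLp 2 ((0 : ℕ) : ℤ)] with w hw
  rw [hw, Nat.cast_zero, fourier_zero, mul_one]

lemma uH2_le_ker (L : L2 →L[ℂ] ℂ) (h : ∀ f ∈ H2, L (toLp2 fun w => u w * f w) = 0) :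
    uH2 u ≤ LinearMap.ker (L : L2 →ₗ[ℂ] ℂ) := by
  refine Submodule.topologicalClosure_minimal _ ?_ L.isClosed_ker
  rw [Submodule.span_le]
  rintro g ⟨f, hf, hg⟩
  rw [SetLike.mem_coe, LinearMap.mem_ker, ← toLp2_coe g, toLp2_congr_ae hg]
  exact h f hf

lemma mem_orthogonal_uH2 {x : L2} (h : ∀ f ∈ H2, ⟪x, toLp2 fun w => u w * f w⟫_ℂ = 0) :
    x ∈ (uH2 u)ᗮ :=
  ((uH2 u).mem_orthogonal' x).mpr fun _ hv => uH2_le_ker (innerSL ℂ x) h hv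

lemma uH2_le_H2 (hu : IsInner u) : uH2 u ≤ H2 := by
  refine Submodule.topologicalClosure_minimal _ ?_ (Submodule.isClosed_topologicalClosure _)
  rw [Submodule.span_le]
  rintro g ⟨f, hf, hg⟩
  rw [SetLike.mem_coe, ← toLp2_coe g, toLp2_congr_ae hg]
  exact mul_mem_H2 hu.memLp_top hu.2.2 hf

lemma Ku_le_H2 : Ku u ≤ H2 := inf_le_left

lemma Ku_le_orthogonal_uH2 : Ku u ≤ (uH2 u)ᗮ := inf_le_right

lemma uH2_le_orthogonal_Ku : uH2 u ≤ (Ku u)ᗮ :=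
  (uH2 u).le_orthogonal_orthogonal.trans (Submodule.orthogonal_le Ku_le_orthogonal_uH2)

lemma mem_uH2_of_mem_orthogonal_Ku (hu : IsInner u) {x : L2} (hx : x ∈ H2)
    (hxK : x ∈ (Ku u)ᗮ) : x ∈ uH2 u := by
  have : CompleteSpace (uH2 u) := (Submodule.isClosed_topologicalClosure _).completeSpace_coe
  set y := (uH2 u).starProjection x
  have hy : y ∈ uH2 u := (uH2 u).starProjection_apply_mem x
  have hxy : x - y ∈ Ku u ⊓ (Ku u)ᗮ :=
    ⟨⟨sub_mem hx (uH2_le_H2 hu hy), (uH2 u).sub_starProjection_mem_orthogonal x⟩,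
      sub_mem hxK (uH2_le_orthogonal_Ku hy)⟩
  rw [Submodule.inf_orthogonal_eq_bot, Submodule.mem_bot, sub_eq_zero] at hxy
  rwa [hxy]

lemma coe_Pu_of_mem {x : L2} (hx : x ∈ Ku u) : (Pu u x : L2) = x :=
  congrArg Subtype.val ((Ku u).orthogonalProjectionOnto_mem_subspace_eq_self ⟨x, hx⟩)

lemma Pu_eq_zero_of_mem_uH2 {x : L2} (hx : x ∈ uH2 u) : Pu u x = 0 :=
  Submodule.orthogonalProjectionOnto_apply_of_mem_orthogonal (uH2_le_orthogonal_Ku hx)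

lemma integral_mul_eq_ev0_mul (hu : MemLp u 2 m) (huH : toLp2 u ∈ H2) {f : L2} (hf : f ∈ H2) :
    ∫ w, u w * f w ∂m = ev0 u * ∫ w, f w ∂m := by
  have hu2 := toLp2_coeFn hu
  rw [ev0, ← integral_congr_ae hu2, ← integral_mul_of_mem_H2 huH hf]
  refine integral_congr_ae ?_
  filter_upwards [hu2] with w hw
  rw [hw]

end ModelSpace

section Kernel

lemma memLp_top_K0fun (hu : IsInner u) : MemLp (K0fun u) ⊤ m :=
  (memLp_const 1).sub (hu.memLp_top.const_mul _)

lemma toLp2_K0fun (hu : IsInner u) :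
    toLp2 (K0fun u) = fourierLp 2 0 - conj (ev0 u) • toLp2 u := by
  refine toLp2_eq_of_ae_eq ?_
  filter_upwards [Lp.coeFn_sub (fourierLp 2 0 : L2) (conj (ev0 u) • toLp2 u),
    Lp.coeFn_smul (conj (ev0 u)) (toLp2 u), coeFn_fourierLp 2 0, toLp2_coeFn hu.memLp_two]
    with w h1 h2 h3 h4
  rw [h1, Pi.sub_apply, h2, Pi.smul_apply, h3, h4, fourier_zero, K0fun, smul_eq_mul]

lemma toLp2_K0fun_mem_Ku (hu : IsInner u) : toLp2 (K0fun u) ∈ Ku u := by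
  refine ⟨?_, mem_orthogonal_uH2 fun f hf => ?_⟩
  · rw [toLp2_K0fun hu]
    exact sub_mem (fourierLp_mem_H2 0) (Submodule.smul_mem _ _ hu.2.2)
  have huf := toLp2_coeFn (memℒp_mul_of_top hu.memLp_top f)
  have h1 : ⟪fourierLp 2 0, toLp2 fun w => u w * f w⟫_ℂ = ∫ w, u w * f w ∂m := by
    rw [← integral_eq_inner_fourierLp_zero]
    exact integral_congr_ae huf
  have h2 : ⟪toLp2 u, toLp2 fun w => u w * f w⟫_ℂ = ∫ w, f w ∂m := by
    rw [inner_eq_integral_of_ae_eq (toLp2_coeFn hu.memLp_two) huf]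
    refine integral_congr_ae ?_
    filter_upwards [hu.conj_mul_self] with w hw
    rw [← mul_assoc, hw, one_mul]
  rw [toLp2_K0fun hu, inner_sub_left, inner_smul_left, Complex.conj_conj, h1, h2,
    integral_mul_eq_ev0_mul hu.memLp_two hu.2.2 hf, sub_self]

lemma K0_coe (hu : IsInner u) : (K0 u : L2) = toLp2 (K0fun u) :=
  coe_Pu_of_mem (toLp2_K0fun_mem_Ku hu)

lemma coeFn_K0 (hu : IsInner u) : ((K0 u : L2) : Circ → ℂ) =ᵐ[m] K0fun u := by
  rw [K0_coe hu]
  exact toLp2_coeFn ((memLp_top_K0fun hu).mono_exponent le_top)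

lemma ev0_eq_inner_K0 (hu : IsInner u) (φ : Ku u) :
    ev0 ((φ : L2) : Circ → ℂ) = ⟪K0 u, φ⟫_ℂ := by
  rw [Submodule.coe_inner, K0_coe hu, toLp2_K0fun hu, inner_sub_left, inner_smul_left,
    Submodule.inner_right_of_mem_orthogonal toLp2_mem_uH2 (Ku_le_orthogonal_uH2 φ.2),
    mul_zero, sub_zero, ev0, integral_eq_inner_fourierLp_zero]

lemma exists_ev0_sub_smul_K0_eq_zero (hu : IsInner u) (φ : Ku u) :
    ∃ t : ℂ, ev0 ((φ - t • K0 u : Ku u) : L2) = 0 := by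
  have h := (ℂ ∙ K0 u).sub_starProjection_mem_orthogonal φ
  rw [Submodule.starProjection_singleton, Submodule.mem_orthogonal_singleton_iff_inner_right,
    ← ev0_eq_inner_K0 hu] at h
  exact ⟨_, h⟩

lemma coeFn_add_smul_K0 (hu : IsInner u) (φ : Ku u) (s : ℂ) :
    ((φ + s • K0 u : Ku u) : L2) =ᵐ[m] fun w => (φ : L2) w + s * K0fun u w := by
  rw [Submodule.coe_add, Submodule.coe_smul]
  filter_upwards [Lp.coeFn_add (φ : L2) (s • (K0 u : L2)), Lp.coeFn_smul s (K0 u : L2),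
    coeFn_K0 hu] with w h1 h2 h3
  rw [h1, Pi.add_apply, h2, Pi.smul_apply, h3, smul_eq_mul]

end Kernel

section Conjugation

lemma coord_mul_C (u f : Circ → ℂ) (w : Circ) :
    coord w * (u w * conj (coord w * f w)) = u w * conj (f w) := by
  rw [map_mul]
  linear_combination (u w * conj (f w)) * coord_mul_conj w

lemma memLp_C {p : ℝ≥0∞} (hu : IsInner u) {f : Circ → ℂ} (hf : MemLp f p m) :
    MemLp (fun w => u w * conj (coord w * f w)) p m := by
  refine hf.of_le (hu.1.mul (Complex.continuous_conj.comp_aestronglyMeasurable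
    (memℒp_top_coord.1.mul hf.1))) ?_
  filter_upwards [hu.2.1] with w hw
  rw [norm_mul, hw, one_mul, RCLike.norm_conj, norm_mul, norm_coord, one_mul]

lemma C_mem_Ku (hu : IsInner u) {f : L2} (hf : f ∈ Ku u) :
    toLp2 (fun w => u w * conj (coord w * f w)) ∈ Ku u := by
  have hC := toLp2_coeFn (memLp_C hu (Lp.memLp f))
  refine ⟨mem_H2_of_fourierCoeff_eq_zero fun j hj => ?_, mem_orthogonal_uH2 fun g hg => ?_⟩
  · -- the `-(n + 1)`-st Fourier coefficient of `C f` is the conjugate of `⟪u zⁿ, f⟫ = 0`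
    obtain ⟨n, rfl⟩ : ∃ n : ℕ, j = -(n + 1) := ⟨(-j - 1).toNat, by omega⟩
    have hn : ⟪toLp2 fun w => u w * fourierLp 2 n w, f⟫_ℂ = 0 :=
      Submodule.inner_right_of_mem_orthogonal (toLp2_mul_mem_uH2 (fourierLp_mem_H2 n))
        (Ku_le_orthogonal_uH2 hf)
    rw [inner_eq_integral_of_ae_eq (toLp2_coeFn (memℒp_mul_of_top hu.memLp_top _))
      (ae_eq_refl f)] at hn
    rw [fourierCoeff_congr_ae hC, ← map_zero (starRingEnd ℂ), ← hn, ← integral_conj, fourierCoeff]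
    refine integral_congr_ae ?_
    filter_upwards [coeFn_fourierLp 2 n] with w hw
    have hshift : fourier (-(-((n : ℤ) + 1))) w = fourier n w * coord w := by
      rw [neg_neg, fourier_add, coord, fourier_one]
    rw [hw, smul_eq_mul, hshift]
    simp only [map_mul, Complex.conj_conj]
    linear_combination (u w * fourier n w * conj (f w)) * coord_mul_conj w
  · rw [inner_eq_integral_of_ae_eq hC (toLp2_coeFn (memℒp_mul_of_top hu.memLp_top g))]
    calc _ = ∫ w, coord w * f w * g w ∂m := by
          refine integral_congr_ae ?_
          filter_upwards [hu.conj_mul_self] with w hw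
          simp only [map_mul, Complex.conj_conj]
          linear_combination (coord w * f w * g w) * hw
      _ = 0 := by
          rw [integral_mul_mul_of_mem_H2 memℒp_top_coord toLp2_coord_mem_H2 (Ku_le_H2 hf) hg,
            integral_coord, zero_mul, zero_mul]

lemma Cop_coe (hu : IsInner u) (φ : Ku u) :
    (Cop u φ : L2) = toLp2 fun w => u w * conj (coord w * (φ : L2) w) :=
  coe_Pu_of_mem (C_mem_Ku hu φ.2)

lemma coeFn_Cop (hu : IsInner u) (φ : Ku u) :
    ((Cop u φ : L2) : Circ → ℂ) =ᵐ[m] fun w => u w * conj (coord w * (φ : L2) w) := by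
  rw [Cop_coe hu]
  exact toLp2_coeFn (memLp_C hu (Lp.memLp _))

lemma Cop_sub_smul (hu : IsInner u) (φ ψ : Ku u) (t : ℂ) :
    Cop u (φ - t • ψ) = Cop u φ - conj t • Cop u ψ := by
  ext1
  rw [Cop_coe hu]
  simp only [Submodule.coe_sub, Submodule.coe_smul]
  refine toLp2_eq_of_ae_eq ?_
  filter_upwards [Lp.coeFn_sub (Cop u φ : L2) (conj t • (Cop u ψ : L2)),
    Lp.coeFn_smul (conj t) (Cop u ψ : L2), coeFn_Cop hu φ, coeFn_Cop hu ψ,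
    Lp.coeFn_sub (φ : L2) (t • (ψ : L2)), Lp.coeFn_smul t (ψ : L2)] with w h1 h2 h3 h4 h5 h6
  rw [h1, Pi.sub_apply, h2, Pi.smul_apply, h3, h4, h5, Pi.sub_apply, h6, Pi.smul_apply]
  simp only [smul_eq_mul, map_mul, map_sub]
  ring

lemma Sop_apply (x : Ku u) : Sop u x = Pu u (toLp2 fun w => coord w * (x : L2) w) := by
  rw [Sop, ContinuousLinearMap.comp_apply, ContinuousLinearMap.comp_apply,
    Submodule.subtypeL_apply, mulCLM_eq_toLp2]

lemma Pu_fourierLp_zero (hu : IsInner u) : Pu u (fourierLp 2 0) = K0 u := by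
  rw [K0, toLp2_K0fun hu, map_sub, map_smul, Pu_eq_zero_of_mem_uH2 toLp2_mem_uH2, smul_zero,
    sub_zero]

lemma Sop_Cop_K0 (hu : IsInner u) : Sop u (Cop u (K0 u)) = -ev0 u • K0 u := by
  have h : (toLp2 fun w => coord w * (Cop u (K0 u) : L2) w) = toLp2 u - ev0 u • fourierLp 2 0 := by
    refine toLp2_eq_of_ae_eq ?_
    filter_upwards [Lp.coeFn_sub (toLp2 u) (ev0 u • (fourierLp 2 0 : L2)),
      Lp.coeFn_smul (ev0 u) (fourierLp 2 0 : L2), toLp2_coeFn hu.memLp_two,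
      coeFn_fourierLp 2 0, coeFn_Cop hu (K0 u), coeFn_K0 hu, hu.conj_mul_self]
      with w h1 h2 h3 h4 h5 h6 h7
    rw [h1, Pi.sub_apply, h2, Pi.smul_apply, h3, h4, h5, coord_mul_C, h6, fourier_zero,
      smul_eq_mul, K0fun]
    simp only [map_sub, map_mul, map_one, Complex.conj_conj]
    linear_combination ev0 u * h7
  rw [Sop_apply, h, map_sub, map_smul, Pu_eq_zero_of_mem_uH2 toLp2_mem_uH2,
    Pu_fourierLp_zero hu, zero_sub, neg_smul]

lemma coeFn_Sop_Cop_sub_smul_K0 (hu : IsInner u) (φ : Ku u) (t : ℂ) :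
    ((Sop u (Cop u (φ - t • K0 u)) : L2) : Circ → ℂ) =ᵐ[m]
      fun w => (Sop u (Cop u φ) : L2) w + conj t * ev0 u * K0fun u w := by
  have h : Sop u (Cop u (φ - t • K0 u)) = Sop u (Cop u φ) + (conj t * ev0 u) • K0 u := by
    rw [Cop_sub_smul hu, map_sub, map_smul, Sop_Cop_K0 hu, smul_smul, mul_neg, neg_smul,
      sub_neg_eq_add]
  rw [h]
  exact coeFn_add_smul_K0 hu _ _

end Conjugation

section Symbols

variable {Φ Ψ Θ : Circ → ℂ} {A B : Ku u →L[ℂ] Ku u}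

lemma IsTTO.congr_ae (hA : IsTTO u Φ A) (h : Φ =ᵐ[m] Ψ) : IsTTO u Ψ A := by
  intro f hf
  rw [hA f hf]
  congr 1
  refine toLp2_congr_ae ?_
  filter_upwards [h] with w hw
  rw [hw]

lemma IsTTO.add (hA : IsTTO u Φ A) (hB : IsTTO u Ψ B) (hΦ : MemLp Φ 2 m) (hΨ : MemLp Ψ 2 m) :
    IsTTO u (fun w => Φ w + Ψ w) (A + B) := by
  intro f hf
  rw [add_apply, hA f hf, hB f hf, ← map_add,
    ← toLp2_add (hf.mul' hΦ) (hf.mul' hΨ)]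
  simp only [add_mul]

lemma IsTTO.const_mul (c : ℂ) (hA : IsTTO u Φ A) (hΦ : MemLp Φ 2 m) :
    IsTTO u (fun w => c * Φ w) (c • A) := by
  intro f hf
  rw [smul_apply, hA f hf, ← map_smul, ← toLp2_const_mul c (hf.mul' hΦ)]
  simp only [mul_assoc]

lemma IsTTO.of_ae_eq_add (hA : IsTTO u Φ A) (hΦ : MemLp Φ 2 m) (h0 : IsTTO u Θ 0)
    (hΘ : MemLp Θ 2 m) (h : Φ =ᵐ[m] fun w => Ψ w + Θ w) : IsTTO u Ψ A := by
  have hΨ := (hA.add (h0.const_mul (-1) hΘ) hΦ (hΘ.const_mul _)).congr_ae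
    (Ψ := Ψ) (by filter_upwards [h] with w hw; rw [hw]; ring)
  convert hΨ using 1
  rw [smul_zero (M := ℂ) (A := Ku u →L[ℂ] Ku u), add_zero]

lemma isTTO_u_zero : IsTTO u u 0 := fun f _ => by
  rw [zero_apply]
  exact (Pu_eq_zero_of_mem_uH2 (toLp2_mul_mem_uH2 (Ku_le_H2 f.2))).symm

lemma integral_mul_conj_mul_mul_eq_zero (hu : IsInner u) {f : Ku u}
    (hf : MemLp ((f : L2) : Circ → ℂ) ⊤ m) {h k : L2} (hh : h ∈ H2) (hk : k ∈ H2) :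
    ∫ w, u w * conj ((f : L2) w) * h w * k w ∂m = 0 := by
  -- `u f̄ = z · C f` is bounded, analytic and vanishes at the origin
  set Cf : L2 := toLp2 fun w => u w * conj (coord w * (f : L2) w)
  have hCf : (Cf : Circ → ℂ) =ᵐ[m] fun w => u w * conj (coord w * (f : L2) w) :=
    toLp2_coeFn (memLp_C hu (Lp.memLp _))
  have hCfH : Cf ∈ H2 := Ku_le_H2 (C_mem_Ku hu f.2)
  have hb : MemLp (fun w => coord w * Cf w) ⊤ m :=
    ((memLp_C hu hf).ae_eq hCf.symm).mul' memℒp_top_coord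
  have hb0 : ∫ w, coord w * Cf w ∂m = 0 := by
    rw [← fourierCoeff_eq_zero_of_mem_H2 hCfH (show (-1 : ℤ) < 0 by norm_num),
      ← integral_mul_fourier]
    simp only [coord, mul_comm]
  calc ∫ w, u w * conj ((f : L2) w) * h w * k w ∂m
      = ∫ w, coord w * Cf w * h w * k w ∂m := by
        refine integral_congr_ae ?_
        filter_upwards [hCf] with w hw
        rw [hw, coord_mul_C]
    _ = 0 := by
        rw [integral_mul_mul_of_mem_H2 hb (mul_mem_H2 memℒp_top_coord toLp2_coord_mem_H2 hCfH)
          hh hk, hb0, zero_mul, zero_mul]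

lemma isTTO_conj_zero_of_mem_uH2 (hu : IsInner u) {x : L2} (hx : x ∈ uH2 u) :
    IsTTO u (fun w => conj (x w)) 0 := by
  intro f hf
  rw [zero_apply, eq_comm]
  refine Submodule.orthogonalProjectionOnto_apply_of_mem_orthogonal
    (((Ku u).mem_orthogonal _).mpr fun k hk => ?_)
  set G := integralMulCLM (toLp2 fun w => k w * conj ((f : L2) w))
  have hG : ∀ y : L2, G y = ∫ w, k w * conj ((f : L2) w) * y w ∂m := fun y => by
    rw [integralMulCLM_apply]
    refine integral_congr_ae ?_
    filter_upwards [toLp2_coeFn ((memLp_conj hf).mul' (Lp.memLp k))] with w hw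
    rw [hw]
  have hGx : G x = 0 := by
    refine uH2_le_ker G (fun g hg => ?_) hx
    rw [hG, ← integral_mul_conj_mul_mul_eq_zero hu hf hg (Ku_le_H2 hk)]
    refine integral_congr_ae ?_
    filter_upwards [toLp2_coeFn (memℒp_mul_of_top hu.memLp_top g)] with w hw
    rw [hw]
    ring
  rw [inner_eq_integral_of_ae_eq (ae_eq_refl k)
    (toLp2_coeFn (hf.mul' (memLp_conj (Lp.memLp x)))), ← map_zero (starRingEnd ℂ), ← hGx, hG,
    ← integral_conj]
  simp only [map_mul, Complex.conj_conj]
  congr 1 with w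
  ring

lemma isTTO_conj_u_zero (hu : IsInner u) : IsTTO u (fun w => conj (u w)) 0 :=
  (isTTO_conj_zero_of_mem_uH2 hu toLp2_mem_uH2).congr_ae
    (by filter_upwards [toLp2_coeFn hu.memLp_two] with w hw; rw [hw])

lemma IsTTO.of_ae_eq_add_u_conj_u (hu : IsInner u) (hA : IsTTO u Φ A) (hΦ : MemLp Φ 2 m)
    {a b : ℂ} (h : Φ =ᵐ[m] fun w => Ψ w + (a * u w + b * conj (u w))) : IsTTO u Ψ A := by
  have hu2 := hu.memLp_two
  have hcu2 := memLp_conj hu2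
  have h0 : IsTTO u (fun w => a * u w + b * conj (u w)) 0 := by
    convert (isTTO_u_zero.const_mul a hu2).add ((isTTO_conj_u_zero hu).const_mul b hcu2)
      (hu2.const_mul a) (hcu2.const_mul b) using 1
    rw [smul_zero (M := ℂ) (A := Ku u →L[ℂ] Ku u), smul_zero (M := ℂ) (A := Ku u →L[ℂ] Ku u),
      add_zero]
  exact hA.of_ae_eq_add hΦ h0 ((hu2.const_mul a).add (hcu2.const_mul b)) h

lemma IsTTO.conj_Pu (hu : IsInner u) {ψ : Circ → ℂ} (hψ : MemLp ψ 2 m) (hψH : toLp2 ψ ∈ H2)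
    (hA : IsTTO u (fun w => conj (ψ w)) A) :
    IsTTO u (fun w => conj ((Pu u (toLp2 ψ) : L2) w)) A := by
  set φ := Pu u (toLp2 ψ)
  have hX : toLp2 ψ - φ ∈ uH2 u := mem_uH2_of_mem_orthogonal_Ku hu
    (sub_mem hψH (Ku_le_H2 φ.2)) ((Ku u).sub_starProjection_mem_orthogonal _)
  refine hA.of_ae_eq_add (memLp_conj hψ) (isTTO_conj_zero_of_mem_uH2 hu hX)
    (memLp_conj (Lp.memLp _)) ?_
  filter_upwards [Lp.coeFn_sub (toLp2 ψ) (φ : L2), toLp2_coeFn hψ] with w h1 h2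
  rw [h1, Pi.sub_apply, h2, map_sub]
  ring

lemma memLp_typeSymbol (α : ℂ) (φ : Ku u) (c : ℂ) : MemLp (typeSymbol u α φ c) 2 m := by
  have hφ : MemLp (fun w => ((φ : L2) : Circ → ℂ) w) 2 m := Lp.memLp _
  have hSCφ : MemLp (fun w => α * conj (((Sop u (Cop u φ) : L2) : Circ → ℂ) w)) 2 m :=
    (memLp_conj (Lp.memLp _)).const_mul α
  exact (hφ.add hSCφ).add (memLp_const c)

lemma coeFn_sub_smul_K0 (hu : IsInner u) (φ : Ku u) (t : ℂ) :
    ((φ - t • K0 u : Ku u) : L2) =ᵐ[m] fun w => (φ : L2) w - t * K0fun u w := by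
  rw [sub_eq_add_neg, ← neg_smul]
  filter_upwards [coeFn_add_smul_K0 hu φ (-t)] with w hw
  rw [hw]
  ring

lemma typeSymbol_ae_eq_sub_smul_K0 (hu : IsInner u) (α : ℂ) (φ : Ku u) (c t : ℂ) :
    typeSymbol u α φ c =ᵐ[m] fun w =>
      (((φ - t • K0 u : Ku u) : L2) w + α * conj ((Sop u (Cop u (φ - t • K0 u)) : L2) w) +
        (t + c - α * t * conj (ev0 u)) * K0fun u w) +
      ((c - α * t * conj (ev0 u)) * conj (ev0 u) * u w +
        α * t * conj (ev0 u) * ev0 u * conj (u w)) := by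
  filter_upwards [coeFn_sub_smul_K0 hu φ t, coeFn_Sop_Cop_sub_smul_K0 hu φ t] with w h1 h2
  simp only [typeSymbol, h1, h2, K0fun, map_add, map_mul, map_sub, map_one, Complex.conj_conj]
  ring

lemma conj_ae_eq_sub_smul_K0 (hu : IsInner u) (φ : Ku u) (t : ℂ) :
    (fun w => conj ((φ : L2) w)) =ᵐ[m] fun w =>
      (conj (((φ - t • K0 u : Ku u) : L2) w) + conj t * K0fun u w) +
      (conj t * conj (ev0 u) * u w + -(conj t * ev0 u) * conj (u w)) := by
  filter_upwards [coeFn_sub_smul_K0 hu φ t] with w hw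
  simp only [hw, K0fun, map_sub, map_mul, map_one, Complex.conj_conj]
  ring

end Symbols

end TTO

theorem TTO.normalized_symbol_general
    (u : Circ → ℂ) (hu : IsInner u) (A : Ku u →L[ℂ] Ku u) :
    (∀ α : ℂ, IsTypeC u α A → ∃ (φ₀ : Ku u) (c : ℂ),
      ev0 ((φ₀ : L2) : Circ → ℂ) = 0 ∧
      IsTTO u (fun w => ((φ₀ : L2) : Circ → ℂ) w +
        α * conj (((Sop u (Cop u φ₀) : L2) : Circ → ℂ) w) + c * K0fun u w) A) ∧
    (IsTypeInf u A → ∃ (φ₀ : Ku u) (c : ℂ),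
      ev0 ((φ₀ : L2) : Circ → ℂ) = 0 ∧
      IsTTO u (fun w => conj (((φ₀ : L2) : Circ → ℂ) w) + c * K0fun u w) A) := by
  constructor
  · rintro α ⟨φ, c, hA⟩
    obtain ⟨t, ht⟩ := exists_ev0_sub_smul_K0_eq_zero hu φ
    exact ⟨_, _, ht, hA.of_ae_eq_add_u_conj_u hu (memLp_typeSymbol α φ c)
      (typeSymbol_ae_eq_sub_smul_K0 hu α φ c t)⟩
  · rintro ⟨ψ, hψ, hψH, hA⟩
    obtain ⟨t, ht⟩ := exists_ev0_sub_smul_K0_eq_zero hu (Pu u (toLp2 ψ))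
    exact ⟨_, _, ht, (hA.conj_Pu hu hψ hψH).of_ae_eq_add_u_conj_u hu (memLp_conj (Lp.memLp _))
      (conj_ae_eq_sub_smul_K0 hu _ t)⟩

/-- Any TTO of type `α ∈ ℂ` has a symbol of the form
`φ₀ + α·conj(S(Cφ₀)) + c·K₀` with `φ₀ ∈ K_u`, `φ₀(0) = 0`, `c ∈ ℂ`; and any TTO of
type `∞` has a symbol of the form `conj(φ₀) + c·K₀` with `φ₀ ∈ K_u`, `φ₀(0) = 0`. -/
theorem TTO.normalized_symbol
    (u : Circ → ℂ) (hu : IsInner u) (hnc : Nonconst u) (A : Ku u →L[ℂ] Ku u) :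
    (∀ α : ℂ, IsTypeC u α A → ∃ (φ₀ : Ku u) (c : ℂ),
      ev0 ((φ₀ : L2) : Circ → ℂ) = 0 ∧
      IsTTO u (fun w => ((φ₀ : L2) : Circ → ℂ) w +
        α * conj (((Sop u (Cop u φ₀) : L2) : Circ → ℂ) w) + c * K0fun u w) A) ∧
    (IsTypeInf u A → ∃ (φ₀ : Ku u) (c : ℂ),
      ev0 ((φ₀ : L2) : Circ → ℂ) = 0 ∧
      IsTTO u (fun w => conj (((φ₀ : L2) : Circ → ℂ) w) + c * K0fun u w) A) :=
  TTO.normalized_symbol_general u hu A
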